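/- arXiv:1810.04526 — 2 statements merged into one kernel-verified Lean document; each statement's English description precedes it below -/
import Mathlib

section
/- Let n ≥ 3 and define S̃(x₀,x₁,x₂) = (x₀ x₁^{n-1} x₂^{n-1})^{1/(2n-1)} · [ (n-1)((n-1)/x₁ + (n-1)/x₂ + 1/x₀) - ((n-1)/2)(x₁/(x₂x₀) + x₂/(x₁x₀) + x₀/(x₁x₂)) ] for positive reals x₀,x₁,x₂. Then ∂S̃/∂x₁ vanishes at (x₀,x₁,x₂) = (2(n-1), n, n). -/
/-- The normalized total scalar curvature (up to constant) of invariant metrics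
on the Stiefel manifold `SO(n+1)/SO(n-1)`. -/
noncomputable def stiefelS (n : ℕ) (x₀ x₁ x₂ : ℝ) : ℝ :=
  (x₀ * x₁ ^ (n - 1) * x₂ ^ (n - 1)) ^ ((1 : ℝ) / (2 * n - 1)) *
    (((n : ℝ) - 1) * (((n : ℝ) - 1) / x₁ + ((n : ℝ) - 1) / x₂ + 1 / x₀)
      - (((n : ℝ) - 1) / 2) * (x₁ / (x₂ * x₀) + x₂ / (x₁ * x₀) + x₀ / (x₁ * x₂)))

/-!
`stiefelS` is `V ^ (1/(2n-1)) * R`, with volume factor `V = x₀ x₁ⁿ⁻¹ x₂ⁿ⁻¹` and scalar curvature `R`.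
The logarithmic derivative of `V ^ p` in `x₁` is `p (n-1) / x₁`, so `∂₁ S̃ = V ^ p (p (n-1) R / x₁ + ∂₁ R)`.
At the Einstein point `(2(n-1), n, n)` one finds `R = (n-1)²(2n-1)/n²` and `∂₁ R = -(n-1)³/n³`,
and the bracket vanishes.
-/

/-- The scalar curvature of `g(x₀, x₁, x₂)`. -/
noncomputable def stiefelScal (n : ℕ) (x₀ x₁ x₂ : ℝ) : ℝ :=
  ((n : ℝ) - 1) * (((n : ℝ) - 1) / x₁ + ((n : ℝ) - 1) / x₂ + 1 / x₀)
    - (((n : ℝ) - 1) / 2) * (x₁ / (x₂ * x₀) + x₂ / (x₁ * x₀) + x₀ / (x₁ * x₂))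

theorem hasDerivAt_mul_pow_mul_rpow {a b x : ℝ} (ha : 0 < a) (hb : 0 < b) (hx : 0 < x)
    (m : ℕ) (p : ℝ) :
    HasDerivAt (fun y => (a * y ^ m * b) ^ p) (p * m / x * (a * x ^ m * b) ^ p) x := by
  have hu : 0 < a * x ^ m * b := by positivity
  convert (((hasDerivAt_pow m x).const_mul a).mul_const b).rpow_const (p := p) (Or.inl hu.ne')
    using 1
  rw [Real.rpow_sub hu, Real.rpow_one]
  rcases m with _ | m
  · simp
  · field_simp
    simp only [Nat.add_sub_cancel, pow_succ]
    ring

theorem hasDerivAt_stiefelScal_x₁ (n : ℕ) {x₀ x₁ x₂ : ℝ} (h₀ : x₀ ≠ 0) (h₁ : x₁ ≠ 0)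
    (h₂ : x₂ ≠ 0) :
    HasDerivAt (fun y => stiefelScal n x₀ y x₂)
      (-((n : ℝ) - 1) ^ 2 / x₁ ^ 2
        - ((n : ℝ) - 1) / 2 * (1 / (x₂ * x₀) - x₂ / (x₁ ^ 2 * x₀) - x₀ / (x₁ ^ 2 * x₂))) x₁ := by
  have affine : (fun y => stiefelScal n x₀ y x₂) = fun y =>
      ((n : ℝ) - 1) * (((n : ℝ) - 1) / x₂ + 1 / x₀)
        + (((n : ℝ) - 1) ^ 2 - ((n : ℝ) - 1) / 2 * (x₂ / x₀ + x₀ / x₂)) * y⁻¹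
        - ((n : ℝ) - 1) / 2 / (x₂ * x₀) * y := by
    funext y
    simp only [stiefelScal, div_eq_mul_inv, mul_inv]
    ring
  rw [affine]
  refine ((((hasDerivAt_inv h₁).const_mul _).const_add _).sub
    ((hasDerivAt_id x₁).const_mul _)).congr_deriv ?_
  field_simp
  ring

theorem hasDerivAt_stiefelS_x₁ (n : ℕ) {x₀ x₁ x₂ : ℝ} (h₀ : 0 < x₀) (h₁ : 0 < x₁)
    (h₂ : 0 < x₂) :
    HasDerivAt (fun y => stiefelS n x₀ y x₂)
      ((x₀ * x₁ ^ (n - 1) * x₂ ^ (n - 1)) ^ ((1 : ℝ) / (2 * n - 1)) *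
        ((1 : ℝ) / (2 * n - 1) * (n - 1 : ℕ) / x₁ * stiefelScal n x₀ x₁ x₂
          + (-((n : ℝ) - 1) ^ 2 / x₁ ^ 2
            - ((n : ℝ) - 1) / 2 * (1 / (x₂ * x₀) - x₂ / (x₁ ^ 2 * x₀) - x₀ / (x₁ ^ 2 * x₂))))) x₁ := by
  refine ((hasDerivAt_mul_pow_mul_rpow h₀ (pow_pos h₂ (n - 1)) h₁ (n - 1)
    ((1 : ℝ) / (2 * n - 1))).mul (hasDerivAt_stiefelScal_x₁ n h₀.ne' h₁.ne' h₂.ne')).congr_deriv ?_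
  ring

theorem stiefel_first_deriv_zero (n : ℕ) (hn : 3 ≤ n) :
    deriv (fun x₁ : ℝ => stiefelS n (2 * ((n : ℝ) - 1)) x₁ (n : ℝ)) (n : ℝ) = 0 := by
  have hn₁ : (1 : ℝ) < n := by exact_mod_cast (by omega : 1 < n)
  have hn₀ : (0 : ℝ) < n := by linarith
  rw [(hasDerivAt_stiefelS_x₁ n (by linarith) hn₀ hn₀).deriv, Nat.cast_sub (by omega),
    Nat.cast_one, stiefelScal]
  have h2n : (2 : ℝ) * n - 1 ≠ 0 := by linarith
  have hn1 : (n : ℝ) - 1 ≠ 0 := by linarith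
  field_simp
  ring
end

section
/- Let n ≥ 3 and define S̃(x₀,x₁,x₂) as in the Stiefel manifold scalar curvature formula: S̃(x₀,x₁,x₂) = (x₀ x₁^{n-1} x₂^{n-1})^{1/(2n-1)} · [ (n-1)((n-1)/x₁ + (n-1)/x₂ + 1/x₀) - ((n-1)/2)(x₁/(x₂x₀) + x₂/(x₁x₀) + x₀/(x₁x₂)) ]. Then ∂²S̃/∂x₁² evaluated at (2(n-1), n, n) is strictly positive. -/
/-!
With `x₀ = 2(n-1)` and `x₂ = n` fixed, `S̃` restricted to `x₁ = x > 0` is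
`K (A x^q + B x^(q-1) + D x^(q+1))` with `q = (n-1)/(2n-1)` and `K > 0`, so its second derivative
at `x = n` is `K n^(q-3) (2n³ - 8n² + 7n - 2) / (2(2n-1))`. Writing `n = 3 + t`, the cubic is
`1 + 13t + 10t² + 2t³ > 0`.
-/

open Filter Topology

theorem Real.iteratedDeriv_two_rpow_const (p x : ℝ) :
    iteratedDeriv 2 (fun y : ℝ => y ^ p) x = p * (p - 1) * x ^ (p - 2) := by
  rw [iteratedDeriv_eq_iterate, Real.iter_deriv_rpow_const]
  simp [descPochhammer_succ_right]

theorem Real.iteratedDeriv_two_linear_combination_rpow {x : ℝ} (hx : x ≠ 0) (a b c p r s : ℝ) :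
    iteratedDeriv 2 (fun y : ℝ => a * y ^ p + b * y ^ r + c * y ^ s) x =
      a * (p * (p - 1) * x ^ (p - 2)) + b * (r * (r - 1) * x ^ (r - 2))
        + c * (s * (s - 1) * x ^ (s - 2)) := by
  have hmonomial (k e : ℝ) : ContDiffAt ℝ 2 (fun y : ℝ => k * y ^ e) x :=
    contDiffAt_const.mul (Real.contDiffAt_rpow_const_of_ne hx)
  rw [iteratedDeriv_fun_add ((hmonomial a p).add (hmonomial b r)) (hmonomial c s),
    iteratedDeriv_fun_add (hmonomial a p) (hmonomial b r)]
  simp only [iteratedDeriv_const_mul_field, Real.iteratedDeriv_two_rpow_const]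

theorem stiefelS_eq_linear_combination_rpow {n : ℕ} (hn : 2 ≤ n) {x : ℝ} (hx : 0 < x) :
    stiefelS n (2 * ((n : ℝ) - 1)) x n =
      (2 * ((n : ℝ) - 1) * (n : ℝ) ^ (n - 1)) ^ ((1 : ℝ) / (2 * n - 1)) *
        (((n - 1) ^ 2 / n + 1 / 2) * x ^ (((n : ℝ) - 1) / (2 * n - 1))
          + ((n - 1) ^ 3 / n - n / 4) * x ^ (((n : ℝ) - 1) / (2 * n - 1) - 1)
          + -(1 / (4 * n)) * x ^ (((n : ℝ) - 1) / (2 * n - 1) + 1)) := by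
  have hn' : (2 : ℝ) ≤ n := by exact_mod_cast hn
  have hcast : ((n - 1 : ℕ) : ℝ) = n - 1 := by push_cast [Nat.cast_sub (by omega : 1 ≤ n)]; ring
  have hn1 : (0 : ℝ) < n - 1 := by linarith
  have h2n1 : (2 * n - 1 : ℝ) ≠ 0 := by linarith
  have hn0 : (n : ℝ) ≠ 0 := by linarith
  rw [stiefelS, show 2 * ((n : ℝ) - 1) * x ^ (n - 1) * (n : ℝ) ^ (n - 1)
      = (2 * ((n : ℝ) - 1) * (n : ℝ) ^ (n - 1)) * x ^ (n - 1) by ring,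
    Real.mul_rpow (by positivity) (by positivity), ← Real.rpow_natCast x, ← Real.rpow_mul hx.le,
    hcast, Real.rpow_sub_one hx.ne', Real.rpow_add_one hx.ne',
    show ((n : ℝ) - 1) * (1 / (2 * n - 1)) = (n - 1) / (2 * n - 1) by ring]
  field_simp
  ring

theorem stiefel_second_deriv_numerator_eq {N q : ℝ} (hN : 1 < N) (hq : q = (N - 1) / (2 * N - 1)) :
    ((N - 1) ^ 2 / N + 1 / 2) * (q * (q - 1)) * N
      + ((N - 1) ^ 3 / N - N / 4) * ((q - 1) * (q - 2)) + -(1 / (4 * N)) * ((q + 1) * q) * N ^ 2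
      = (2 * N ^ 3 - 8 * N ^ 2 + 7 * N - 2) / (2 * (2 * N - 1)) := by
  have hN0 : N ≠ 0 := by linarith
  have h2N1 : N * 2 - 1 ≠ 0 := by linarith
  subst hq
  field_simp
  ring

theorem stiefel_second_deriv_numerator_pos {N q : ℝ} (hN : 3 ≤ N) (hq : q = (N - 1) / (2 * N - 1)) :
    0 < ((N - 1) ^ 2 / N + 1 / 2) * (q * (q - 1)) * N
      + ((N - 1) ^ 3 / N - N / 4) * ((q - 1) * (q - 2)) + -(1 / (4 * N)) * ((q + 1) * q) * N ^ 2 := by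
  rw [stiefel_second_deriv_numerator_eq (by linarith) hq]
  obtain ⟨t, ht, rfl⟩ : ∃ t : ℝ, 0 ≤ t ∧ N = 3 + t := ⟨N - 3, by linarith, by ring⟩
  have hcubic : 2 * (3 + t) ^ 3 - 8 * (3 + t) ^ 2 + 7 * (3 + t) - 2
      = 1 + 13 * t + 10 * t ^ 2 + 2 * t ^ 3 := by ring
  rw [hcubic]
  exact div_pos (by positivity) (by linarith)

theorem stiefel_second_deriv_pos (n : ℕ) (hn : 3 ≤ n) :
    0 < iteratedDeriv 2 (fun x₁ : ℝ => stiefelS n (2 * ((n : ℝ) - 1)) x₁ (n : ℝ)) (n : ℝ) := by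
  have hN : (3 : ℝ) ≤ n := by exact_mod_cast hn
  have hpos : (0 : ℝ) < n := by linarith
  have hline := eventually_of_mem (Ioi_mem_nhds hpos) fun x hx =>
    stiefelS_eq_linear_combination_rpow (n := n) (by omega) hx
  rw [EventuallyEq.iteratedDeriv_eq 2 hline, iteratedDeriv_const_mul_field,
    Real.iteratedDeriv_two_linear_combination_rpow hpos.ne']
  set q := ((n : ℝ) - 1) / (2 * n - 1) with hq
  have hK : 0 < (2 * ((n : ℝ) - 1) * (n : ℝ) ^ (n - 1)) ^ ((1 : ℝ) / (2 * n - 1)) :=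
    Real.rpow_pos_of_pos (mul_pos (by linarith) (by positivity)) _
  refine lt_of_lt_of_eq (mul_pos hK (mul_pos (Real.rpow_pos_of_pos hpos (q - 3))
    (stiefel_second_deriv_numerator_pos hN hq))) ?_
  rw [show q - 2 = q - 3 + (1 : ℕ) by push_cast; ring, show q - 1 - 2 = q - 3 + (0 : ℕ) by simp; ring,
    show q + 1 - 2 = q - 3 + (2 : ℕ) by push_cast; ring, Real.rpow_add_natCast hpos.ne',
    Real.rpow_add_natCast hpos.ne', Real.rpow_add_natCast hpos.ne']
  ring
end
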